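/- Let γ ≥ 2 be fixed and let E be a subset of Euclidean space with |E| > 1 which is a finite union of finitely overlapping cubes of side-length c ∼ 1. Then for each K ∈ ℕ there are subsets E₁, E₂, …, E_K of E with E = ∪_{k=1}^K E_k such that each E_k is covered by the union of O(|E|^{1/K}) many sparse collections 𝐒₁, 𝐒₂, …, 𝐒_{O(|E|^{1/K})}, each of which is an (O(|E|), |E|^{O(γ^{k−1})})-sparse collection of balls. -/

import Mathlib

/-!
Cover `E` by a `1`-net `Z` of `O(|E|)` points, a grid in each cube. Peeling `A` maximal
`D`-separated layers off a finite set leaves only points with `A` neighbours within `D`, and a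
maximal `2D`-separated subset of these is smaller by a factor `A`. Running this at the scales
`D k = (|Z| r k) ^ γ`, `r (k + 1) = r k + 2 D k`, with `A ≈ |Z| ^ (1 / K)`, exhausts `Z` after `K`
rounds; round `k` yields `A` sparse collections of balls of radius `r k = |Z| ^ O(γ ^ k)`. When
`|E| < 2` a single ball around each net point already forms a sparse collection.
-/

open MeasureTheory Set
open scoped ENNReal NNReal

noncomputable section
open scoped Classical

/-- The axis-parallel cube of side-length `c` centered at `p`. -/
def cube {d : ℕ} (p : EuclideanSpace ℝ (Fin d)) (c : ℝ) : Set (EuclideanSpace ℝ (Fin d)) :=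
  {x | ∀ i : Fin d, |x i - p i| ≤ c / 2}

/-- A family of `N` balls of radius `R` with centers `z i` is `(N,R)`-sparse if the centers are
`(NR)^γ`-separated. -/
def IsSparseFamilyEuc {d : ℕ} (γ : ℝ) (N : ℕ) (R : ℝ)
    (z : Fin N → EuclideanSpace ℝ (Fin d)) : Prop :=
  ∀ i j : Fin N, i ≠ j → ((N : ℝ) * R) ^ γ ≤ dist (z i) (z j)

open scoped Finset

section Separated

variable {α : Type*} [MetricSpace α] {D : ℝ}

theorem exists_separated_net_subset (hD : 0 < D) (s : Finset α) :
    ∃ t ⊆ s, (t : Set α).Pairwise (D ≤ dist · ·) ∧ ∀ x ∈ s, ∃ y ∈ t, dist x y < D := by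
  induction s using Finset.induction_on with
  | empty => exact ⟨∅, subset_rfl, by simp, by simp⟩
  | insert a s _ ih =>
    obtain ⟨t, hts, ht, hst⟩ := ih
    by_cases ha : ∃ y ∈ t, dist a y < D
    · refine ⟨t, hts.trans (Finset.subset_insert a s), ht, ?_⟩
      simpa [ha] using hst
    · push Not at ha
      refine ⟨insert a t, Finset.insert_subset_insert a hts, ?_, ?_⟩
      · rw [Finset.coe_insert]
        exact ht.insert fun y hy _ => ⟨ha y hy, dist_comm a y ▸ ha y hy⟩
      · simp only [Finset.mem_insert, forall_eq_or_imp, exists_eq_or_imp, dist_self, hD, true_or,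
          true_and]
        exact fun x hx => Or.inr (hst x hx)

/-- Peeling off `A` maximal `D`-separated subsets in turn, each point left over is `D`-close to a
point of every layer, so it has at least `A` points of `s` in its `D`-ball. -/
theorem exists_separated_layers (hD : 0 < D) (A : ℕ) (s : Finset α) :
    ∃ (G : Fin A → Finset α) (r : Finset α),
      (∀ t, G t ⊆ s ∧ (G t : Set α).Pairwise (D ≤ dist · ·)) ∧ r ⊆ s ∧
      (∀ x ∈ s, (∃ t, x ∈ G t) ∨ x ∈ r) ∧ ∀ x ∈ r, A ≤ #{y ∈ s | dist x y < D} := by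
  induction A generalizing s with
  | zero =>
    exact ⟨Fin.elim0, s, Fin.rec0, subset_rfl, fun x hx => Or.inr hx, fun _ _ => Nat.zero_le _⟩
  | succ A ih =>
    obtain ⟨t₀, ht₀s, ht₀, hst₀⟩ := exists_separated_net_subset hD s
    obtain ⟨G, r, hG, hr, hcov, hrich⟩ := ih (s \ t₀)
    refine ⟨Fin.cons t₀ G, r, Fin.cases ⟨ht₀s, ht₀⟩ fun t => ⟨(hG t).1.trans Finset.sdiff_subset,
      (hG t).2⟩, hr.trans Finset.sdiff_subset, fun x hx => ?_, fun x hx => ?_⟩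
    · by_cases hxt : x ∈ t₀
      · exact Or.inl ⟨0, by simpa using hxt⟩
      · refine (hcov x (Finset.mem_sdiff.2 ⟨hx, hxt⟩)).imp_left fun ⟨t, ht⟩ => ⟨t.succ, ?_⟩
        simpa using ht
    · obtain ⟨y, hyt₀, hxy⟩ := hst₀ x (Finset.sdiff_subset (hr hx))
      have hy : y ∉ {z ∈ s \ t₀ | dist x z < D} := by simp [hyt₀]
      have hsub : insert y {z ∈ s \ t₀ | dist x z < D} ⊆ {z ∈ s | dist x z < D} :=
        Finset.insert_subset (Finset.mem_filter.2 ⟨ht₀s hyt₀, hxy⟩)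
          (Finset.filter_subset_filter _ Finset.sdiff_subset)
      have hle := Finset.card_le_card hsub
      rw [Finset.card_insert_of_notMem hy] at hle
      exact (Nat.succ_le_succ (hrich x hx)).trans hle

theorem exists_separated_layers_step (hD : 0 < D) (A : ℕ) (Y : Finset α) :
    ∃ (G : Fin A → Finset α) (Y' : Finset α),
      (∀ t, G t ⊆ Y ∧ (G t : Set α).Pairwise (D ≤ dist · ·)) ∧ Y' ⊆ Y ∧ A * #Y' ≤ #Y ∧
      ∀ y ∈ Y, (∃ t, y ∈ G t) ∨ ∃ y' ∈ Y', dist y y' < 2 * D := by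
  obtain ⟨G, r, hG, hrY, hcov, hrich⟩ := exists_separated_layers hD A Y
  obtain ⟨Y', hY'r, hY', hrY'⟩ := exists_separated_net_subset (by linarith : 0 < 2 * D) r
  refine ⟨G, Y', hG, hY'r.trans hrY, ?_, fun y hy => (hcov y hy).imp_right (hrY' y)⟩
  have hdisj : (Y' : Set α).PairwiseDisjoint fun y => {z ∈ Y | dist y z < D} := by
    intro y₁ h₁ y₂ h₂ hne
    refine Finset.disjoint_left.2 fun z hz₁ hz₂ => ?_
    have := dist_triangle_right y₁ y₂ z
    linarith [hY' h₁ h₂ hne, (Finset.mem_filter.1 hz₁).2, (Finset.mem_filter.1 hz₂).2]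
  calc A * #Y' = ∑ _y ∈ Y', A := by rw [Finset.sum_const, smul_eq_mul, mul_comm]
    _ ≤ ∑ y ∈ Y', #{z ∈ Y | dist y z < D} := Finset.sum_le_sum fun y hy => hrich y (hY'r hy)
    _ = #(Y'.biUnion fun y => {z ∈ Y | dist y z < D}) := (Finset.card_biUnion hdisj).symm
    _ ≤ #Y := Finset.card_le_card (Finset.biUnion_subset.2 fun _ _ => Finset.filter_subset _ _)

end Separated

section Multiscale

variable {α : Type*} [MetricSpace α]

/-- Iterate `exists_separated_layers_step` at the scales `D k, D (k + 1), …`: each step shrinks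
the set of remaining points by a factor `A`, so `n` steps exhaust `Y`. -/
theorem exists_multiscale_separated_cover {D r : ℕ → ℝ} (hD : ∀ k, 0 < D k)
    (hr : ∀ k, r k + 2 * D k ≤ r (k + 1)) (A n k : ℕ) (Y : Finset α) (hY : #Y < A ^ n) :
    ∃ G : ℕ → Fin A → Finset α,
      (∀ j t, G j t ⊆ Y ∧ (G j t : Set α).Pairwise (D j ≤ dist · ·)) ∧
      ∀ y ∈ Y, ∃ j, k ≤ j ∧ j < k + n ∧ ∃ t, ∃ g ∈ G j t, dist y g ≤ r j - r k := by
  induction n generalizing k Y with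
  | zero =>
    obtain rfl : Y = ∅ := Finset.card_eq_zero.1 (by simpa using hY)
    exact ⟨fun _ _ => ∅, by simp, by simp⟩
  | succ n ih =>
    obtain ⟨G₀, Y', hG₀, hY'Y, hcard, hcov⟩ := exists_separated_layers_step (hD k) A Y
    have hY' : #Y' < A ^ n := by
      rw [pow_succ'] at hY
      exact Nat.lt_of_mul_lt_mul_left (hcard.trans_lt hY)
    obtain ⟨G', hG', hcov'⟩ := ih (k + 1) Y' hY'
    refine ⟨Function.update G' k G₀, fun j t => ?_, fun y hy => ?_⟩
    · rcases eq_or_ne j k with rfl | hjk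
      · simpa using hG₀ t
      · simpa [hjk] using ⟨(hG' j t).1.trans hY'Y, (hG' j t).2⟩
    · rcases hcov y hy with ⟨t, hyt⟩ | ⟨y', hy', hyy'⟩
      · exact ⟨k, le_rfl, by omega, t, y, by simpa using hyt, by simp⟩
      · obtain ⟨j, hkj, hjn, t, g, hg, hy'g⟩ := hcov' y' hy'
        refine ⟨j, by omega, by omega, t, g, by simpa [show j ≠ k by omega] using hg, ?_⟩
        linarith [dist_triangle y y' g, hr k]

end Multiscale

/-- Generation `k` of balls has radius `sparseRadius m γ k` and is
`(m * sparseRadius m γ k) ^ γ`-separated; passing a point on to generation `k + 1` moves it by at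
most twice that separation. -/
def sparseRadius (m : ℕ) (γ : ℝ) : ℕ → ℝ
  | 0 => 1
  | k + 1 => sparseRadius m γ k + 2 * (m * sparseRadius m γ k) ^ γ

theorem one_le_sparseRadius (m : ℕ) (γ : ℝ) (k : ℕ) : 1 ≤ sparseRadius m γ k := by
  induction k with
  | zero => exact le_rfl
  | succ k ih =>
    have : 0 ≤ ((m : ℝ) * sparseRadius m γ k) ^ γ := by positivity
    simp only [sparseRadius]
    linarith

theorem sparseRadius_le {m : ℕ} (hm : 1 ≤ m) {γ : ℝ} (hγ : 2 ≤ γ) (k : ℕ) :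
    sparseRadius m γ k ≤ (3 * m) ^ (3 * γ ^ k - 3) := by
  have hm' : (1 : ℝ) ≤ m := by exact_mod_cast hm
  induction k with
  | zero => simp [sparseRadius]
  | succ k ih =>
    set R := sparseRadius m γ k
    have hR := one_le_sparseRadius m γ k
    have hR_le : R ≤ (m * R) ^ γ := by
      calc R ≤ m * R := le_mul_of_one_le_left (by linarith) hm'
        _ ≤ (m * R) ^ γ := Real.self_le_rpow_of_one_le (one_le_mul_of_one_le_of_one_le hm' hR)
            (by linarith)
    have hmR : m * R ≤ (3 * m) ^ (1 + (3 * γ ^ k - 3)) := by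
      rw [Real.rpow_add (by positivity), Real.rpow_one]
      gcongr
      linarith
    have hγk : 1 ≤ γ ^ k := one_le_pow₀ (by linarith)
    calc sparseRadius m γ (k + 1) = R + 2 * (m * R) ^ γ := rfl
      _ ≤ 3 * (m * R) ^ γ := by linarith
      _ ≤ 3 * m * ((3 * m) ^ (1 + (3 * γ ^ k - 3))) ^ γ := by gcongr; linarith
      _ = (3 * m) ^ (1 + (1 + (3 * γ ^ k - 3)) * γ) := by
          rw [← Real.rpow_mul (by positivity), Real.rpow_add (by positivity) 1, Real.rpow_one]
      _ ≤ (3 * m) ^ (3 * γ ^ (k + 1) - 3) := by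
          refine Real.rpow_le_rpow_of_exponent_le (by linarith) ?_
          rw [pow_succ]
          nlinarith

theorem sparseRadius_le_rpow {m : ℕ} (hm : 1 ≤ m) {γ : ℝ} (hγ : 2 ≤ γ) {V c : ℝ} (hV : 1 ≤ V)
    (hmV : 3 * m ≤ V ^ c) (k : ℕ) : sparseRadius m γ k ≤ V ^ (3 * c * γ ^ k) := by
  have hm' : (1 : ℝ) ≤ m := by exact_mod_cast hm
  calc sparseRadius m γ k ≤ (3 * m) ^ (3 * γ ^ k - 3) := sparseRadius_le hm hγ k
    _ ≤ (3 * m) ^ (3 * γ ^ k) := Real.rpow_le_rpow_of_exponent_le (by linarith) (by linarith)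
    _ ≤ (V ^ c) ^ (3 * γ ^ k) := by gcongr
    _ = V ^ (3 * c * γ ^ k) := by rw [← Real.rpow_mul (by linarith)]; ring_nf

section SparseFamilies

variable {d : ℕ} {γ : ℝ}

def CoveredBySparseFamilies (γ : ℝ) (S : Set (EuclideanSpace ℝ (Fin d))) (J N R : ℝ) : Prop :=
  ∃ (n : ℕ) (Ns : Fin n → ℕ) (Rs : Fin n → ℝ)
      (ctr : (j : Fin n) → Fin (Ns j) → EuclideanSpace ℝ (Fin d)),
    (n : ℝ) ≤ J ∧ (∀ j, (Ns j : ℝ) ≤ N) ∧ (∀ j, 0 < Rs j ∧ Rs j ≤ R) ∧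
    (∀ j, IsSparseFamilyEuc γ (Ns j) (Rs j) (ctr j)) ∧
    S ⊆ ⋃ j, ⋃ i, Metric.ball (ctr j i) (Rs j)

theorem CoveredBySparseFamilies.mono {S S' : Set (EuclideanSpace ℝ (Fin d))} {J J' N N' R R' : ℝ}
    (h : CoveredBySparseFamilies γ S J N R) (hS : S' ⊆ S) (hJ : J ≤ J') (hN : N ≤ N')
    (hR : R ≤ R') : CoveredBySparseFamilies γ S' J' N' R' := by
  obtain ⟨n, Ns, Rs, ctr, hn, hNs, hRs, hsparse, hcov⟩ := h
  exact ⟨n, Ns, Rs, ctr, hn.trans hJ, fun j => (hNs j).trans hN,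
    fun j => ⟨(hRs j).1, (hRs j).2.trans hR⟩, hsparse, hS.trans hcov⟩

theorem coveredBySparseFamilies_of_finsets (hγ : 0 ≤ γ) {A N : ℕ} {R : ℝ} (hR : 0 < R)
    (G : Fin A → Finset (EuclideanSpace ℝ (Fin d))) (hcard : ∀ t, #(G t) ≤ N)
    (hsep : ∀ t, (G t : Set (EuclideanSpace ℝ (Fin d))).Pairwise ((N * R) ^ γ ≤ dist · ·))
    {S : Set (EuclideanSpace ℝ (Fin d))} (hS : S ⊆ ⋃ t, ⋃ g ∈ G t, Metric.ball g R) :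
    CoveredBySparseFamilies γ S A N R := by
  refine ⟨A, fun t => #(G t), fun _ => R, fun t i => (G t).equivFin.symm i, le_rfl,
    fun t => by exact_mod_cast hcard t, fun _ => ⟨hR, le_rfl⟩, fun t i i' hii' => ?_, ?_⟩
  · refine le_trans ?_ (hsep t (Finset.coe_mem _) (Finset.coe_mem _) ?_)
    · gcongr
      exact_mod_cast hcard t
    · exact fun h => hii' ((G t).equivFin.symm.injective (Subtype.ext h))
  · refine hS.trans (Set.iUnion_mono fun t => Set.iUnion₂_subset fun g hg => ?_)
    exact Set.subset_iUnion_of_subset ((G t).equivFin ⟨g, hg⟩) (by simp)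

theorem coveredBySparseFamilies_of_dist_lt_one (hγ : 0 ≤ γ)
    (Z : Finset (EuclideanSpace ℝ (Fin d))) {S : Set (EuclideanSpace ℝ (Fin d))}
    (hS : ∀ x ∈ S, ∃ z ∈ Z, dist x z < 1) :
    CoveredBySparseFamilies γ S #Z 1 1 := by
  have hcov : S ⊆ ⋃ t, ⋃ g ∈ ({(Z.equivFin.symm t : EuclideanSpace ℝ (Fin d))} : Finset _),
      Metric.ball g 1 := fun x hx => by
    obtain ⟨z, hz, hxz⟩ := hS x hx
    exact Set.mem_iUnion.2 ⟨Z.equivFin ⟨z, hz⟩, by simpa using hxz⟩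
  simpa using coveredBySparseFamilies_of_finsets hγ (N := 1) one_pos _ (fun _ => by simp)
    (fun _ => by simp) hcov

theorem exists_decomposition_coveredBySparseFamilies (hγ : 0 ≤ γ)
    {Z : Finset (EuclideanSpace ℝ (Fin d))} (hZ : Z.Nonempty) {S : Set (EuclideanSpace ℝ (Fin d))}
    (hS : ∀ x ∈ S, ∃ z ∈ Z, dist x z < 1) {A K : ℕ} (hAK : #Z < A ^ K) :
    ∃ Ek : Fin K → Set (EuclideanSpace ℝ (Fin d)), S = ⋃ k, Ek k ∧ (∀ k, Ek k ⊆ S) ∧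
      ∀ k : Fin K, CoveredBySparseFamilies γ (Ek k) A #Z (sparseRadius #Z γ k) := by
  set r := sparseRadius #Z γ
  have hr : ∀ k, 0 < r k := fun k => zero_lt_one.trans_le (one_le_sparseRadius _ _ k)
  obtain ⟨G, hG, hcov⟩ :=
    exists_multiscale_separated_cover (r := r) (D := fun k => (#Z * r k) ^ γ)
    (fun k => by have := hZ.card_pos; have := hr k; positivity) (fun k => le_rfl) A K 0 Z hAK
  refine ⟨fun k => S ∩ ⋃ t, ⋃ g ∈ G k t, Metric.ball g (r k), ?_, fun k => Set.inter_subset_left,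
    fun k => coveredBySparseFamilies_of_finsets hγ (hr k) (G k)
      (fun t => Finset.card_le_card (hG k t).1) (fun t => (hG k t).2) Set.inter_subset_right⟩
  refine (Set.iUnion_subset fun k => Set.inter_subset_left).antisymm' fun x hx => ?_
  obtain ⟨z, hz, hxz⟩ := hS x hx
  obtain ⟨k, -, hk, t, g, hg, hzg⟩ := hcov z hz
  refine Set.mem_iUnion.2 ⟨⟨k, by omega⟩, hx, Set.mem_iUnion₂.2 ⟨t, g, ?_⟩⟩
  exact Set.mem_iUnion.2 ⟨hg, Metric.mem_ball.2 <| by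
    linarith [dist_triangle x z g, show r 0 = 1 from rfl]⟩

end SparseFamilies

section Overlap

variable {X ι : Type*} [MeasurableSpace X]

theorem Finset.sum_measure_le_mul_measure_biUnion (μ : Measure X) (s : Finset ι) {f : ι → Set X}
    (hf : ∀ i, MeasurableSet (f i)) {M : ℕ} (hM : ∀ x, #{i ∈ s | x ∈ f i} ≤ M) :
    ∑ i ∈ s, μ (f i) ≤ M * μ (⋃ i ∈ s, f i) := by
  set U := ⋃ i ∈ s, f i
  have hU : MeasurableSet U := s.measurableSet_biUnion fun i _ => hf i
  have hpoint : ∀ x, ∑ i ∈ s, (f i).indicator 1 x ≤ (M : ℝ≥0∞) * U.indicator 1 x := by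
    intro x
    by_cases hx : x ∈ U
    · simp only [Set.indicator_apply, Pi.one_apply, Finset.sum_boole, hx, if_true, mul_one]
      exact_mod_cast hM x
    · rw [Set.indicator_of_notMem hx, mul_zero, Finset.sum_eq_zero fun i hi =>
        Set.indicator_of_notMem (fun hxi => hx (Set.mem_biUnion hi hxi)) _]
  calc ∑ i ∈ s, μ (f i) = ∑ i ∈ s, ∫⁻ x, (f i).indicator 1 x ∂μ := by
        simp only [lintegral_indicator_one (hf _)]
    _ = ∫⁻ x, ∑ i ∈ s, (f i).indicator 1 x ∂μ :=
        (lintegral_finsetSum _ fun i _ => measurable_one.indicator (hf i)).symm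
    _ ≤ ∫⁻ x, M * U.indicator 1 x ∂μ := lintegral_mono hpoint
    _ = M * μ U := by rw [lintegral_const_mul _ (measurable_one.indicator hU),
        lintegral_indicator_one hU]

end Overlap

section Cubes

variable {d : ℕ}

theorem cube_eq_preimage_pi (p : EuclideanSpace ℝ (Fin d)) (c : ℝ) :
    cube p c = (MeasurableEquiv.toLp 2 (Fin d → ℝ)).symm ⁻¹'
      Set.univ.pi fun i => Set.Icc (p i - c / 2) (p i + c / 2) := by
  ext x
  simp only [cube, Set.mem_ofPred_eq, Set.mem_preimage, Set.mem_univ_pi, Set.mem_Icc,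
    MeasurableEquiv.coe_toLp_symm, abs_le]
  exact forall_congr' fun i => by constructor <;> intro h <;> constructor <;> linarith [h.1, h.2]

theorem measurableSet_cube (p : EuclideanSpace ℝ (Fin d)) (c : ℝ) : MeasurableSet (cube p c) := by
  rw [cube_eq_preimage_pi]
  exact (MeasurableEquiv.toLp 2 _).symm.measurable (.univ_pi fun _ => measurableSet_Icc)

theorem volume_cube (p : EuclideanSpace ℝ (Fin d)) (c : ℝ) :
    volume (cube p c) = ENNReal.ofReal c ^ d := by
  rw [cube_eq_preimage_pi, (EuclideanSpace.volume_preserving_symm_measurableEquiv_toLp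
    (Fin d)).measure_preimage (MeasurableSet.univ_pi fun _ => measurableSet_Icc).nullMeasurableSet,
    volume_pi_pi]
  simp [Real.volume_Icc]

end Cubes

section Grid

variable {d : ℕ}

def cubeGrid (p : EuclideanSpace ℝ (Fin d)) : Finset (EuclideanSpace ℝ (Fin d)) :=
  (Fintype.piFinset fun _ : Fin d => Finset.Icc (-(d + 1 : ℤ)) (d + 1)).image
    fun v => WithLp.toLp 2 fun i => p i + v i / (d + 1)

theorem card_cubeGrid_le (p : EuclideanSpace ℝ (Fin d)) : #(cubeGrid p) ≤ (2 * d + 3) ^ d := by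
  refine Finset.card_image_le.trans (le_of_eq ?_)
  simp only [Fintype.card_piFinset, Int.card_Icc, Finset.prod_const, Finset.card_univ,
    Fintype.card_fin]
  congr 1
  omega

theorem exists_mem_cubeGrid_dist_lt_one {p x : EuclideanSpace ℝ (Fin d)} {c : ℝ} (hc : c ≤ 2)
    (hx : x ∈ cube p c) : ∃ z ∈ cubeGrid p, dist x z < 1 := by
  have hd : (0 : ℝ) < d + 1 := by positivity
  set v : Fin d → ℤ := fun i => ⌊(x i - p i) * (d + 1)⌋
  have hv : v ∈ Fintype.piFinset fun _ : Fin d => Finset.Icc (-(d + 1 : ℤ)) (d + 1) := by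
    simp only [Fintype.mem_piFinset, Finset.mem_Icc]
    intro i
    have hxi := abs_le.1 ((hx i).trans (by linarith : c / 2 ≤ 1))
    constructor
    · rw [Int.le_floor]; push_cast; nlinarith
    · rw [Int.floor_le_iff]; push_cast; nlinarith
  refine ⟨_, Finset.mem_image_of_mem _ hv, ?_⟩
  have hcoord : ∀ i, dist (x i) (p i + v i / (d + 1)) ^ 2 ≤ 1 / (d + 1) ^ 2 := by
    intro i
    have hfract : (x i - p i) * (d + 1) - v i = Int.fract ((x i - p i) * (d + 1)) :=
      Int.self_sub_floor _
    have : x i - (p i + v i / (d + 1)) = Int.fract ((x i - p i) * (d + 1)) / (d + 1) := by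
      rw [← hfract]; field_simp; ring
    rw [Real.dist_eq, this, sq_abs, div_pow]
    gcongr
    nlinarith [Int.fract_nonneg ((x i - p i) * (d + 1)), Int.fract_lt_one ((x i - p i) * (d + 1))]
  rw [EuclideanSpace.dist_eq, Real.sqrt_lt' one_pos]
  calc ∑ i, dist (x i) (p i + v i / (d + 1)) ^ 2 ≤ ∑ _i : Fin d, 1 / ((d : ℝ) + 1) ^ 2 :=
        Finset.sum_le_sum fun i _ => hcoord i
    _ = d / (d + 1) ^ 2 := by simp [div_eq_mul_inv]
    _ < 1 ^ 2 := by rw [one_pow, div_lt_one (by positivity)]; nlinarith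

end Grid

section Net

variable {d : ℕ}

theorem volume_biUnion_cube_lt_top (P : Finset (EuclideanSpace ℝ (Fin d))) (c : ℝ) :
    volume (⋃ p ∈ P, cube p c) < ∞ :=
  (measure_biUnion_finset_le P _).trans_lt <| ENNReal.sum_lt_top.2 fun p _ => by
    simp [volume_cube]

theorem card_le_of_eq_biUnion_cube {E : Set (EuclideanSpace ℝ (Fin d))} {c : ℝ} (hc : 1 / 2 ≤ c)
    {P : Finset (EuclideanSpace ℝ (Fin d))} (hE : E = ⋃ p ∈ P, cube p c) {M : ℕ}
    (hM : ∀ x, #{p ∈ P | x ∈ cube p c} ≤ M) : (#P : ℝ) ≤ 2 ^ d * M * (volume E).toReal := by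
  have hfin : volume E ≠ ∞ := (hE ▸ volume_biUnion_cube_lt_top P c).ne
  have h := Finset.sum_measure_le_mul_measure_biUnion volume P (measurableSet_cube · c) hM
  simp only [volume_cube, Finset.sum_const, nsmul_eq_mul, ← hE] at h
  have h' := ENNReal.toReal_mono (ENNReal.mul_ne_top (by simp) hfin) h
  simp only [ENNReal.toReal_mul, ENNReal.toReal_pow, ENNReal.toReal_natCast,
    ENNReal.toReal_ofReal (by linarith : 0 ≤ c)] at h'
  calc (#P : ℝ) = #P * (1 / 2) ^ d * 2 ^ d := by rw [mul_assoc, ← mul_pow]; norm_num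
    _ ≤ #P * c ^ d * 2 ^ d := by gcongr
    _ ≤ M * (volume E).toReal * 2 ^ d := by gcongr
    _ = 2 ^ d * M * (volume E).toReal := by ring

theorem exists_net_of_eq_biUnion_cube {E : Set (EuclideanSpace ℝ (Fin d))} (hne : E.Nonempty)
    {c : ℝ} (hc₁ : 1 / 2 ≤ c) (hc₂ : c ≤ 2) {P : Finset (EuclideanSpace ℝ (Fin d))}
    (hE : E = ⋃ p ∈ P, cube p c) {M : ℕ} (hM : ∀ x, #{p ∈ P | x ∈ cube p c} ≤ M) :
    ∃ Z : Finset (EuclideanSpace ℝ (Fin d)), Z.Nonempty ∧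
      (#Z : ℝ) ≤ (4 * d + 6) ^ d * M * (volume E).toReal ∧ ∀ x ∈ E, ∃ z ∈ Z, dist x z < 1 := by
  have hcov : ∀ x ∈ E, ∃ z ∈ P.biUnion cubeGrid, dist x z < 1 := fun x hx => by
    obtain ⟨p, hp, hxp⟩ := Set.mem_iUnion₂.1 (hE ▸ hx)
    obtain ⟨z, hz, hxz⟩ := exists_mem_cubeGrid_dist_lt_one hc₂ hxp
    exact ⟨z, Finset.mem_biUnion.2 ⟨p, hp, hz⟩, hxz⟩
  have hcard : #(P.biUnion cubeGrid) ≤ #P * (2 * d + 3) ^ d :=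
    Finset.card_biUnion_le.trans (Finset.sum_le_card_nsmul _ _ _ fun p _ => card_cubeGrid_le p)
  obtain ⟨x, hx⟩ := hne
  obtain ⟨z, hz, -⟩ := hcov x hx
  refine ⟨P.biUnion cubeGrid, ⟨z, hz⟩, ?_, hcov⟩
  calc (#(P.biUnion cubeGrid) : ℝ) ≤ #P * (2 * d + 3) ^ d := by exact_mod_cast hcard
    _ ≤ 2 ^ d * M * (volume E).toReal * (2 * d + 3) ^ d := by
        gcongr
        exact card_le_of_eq_biUnion_cube hc₁ hE hM
    _ = (4 * d + 6) ^ d * M * (volume E).toReal := by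
        rw [show (4 * d + 6 : ℝ) = 2 * (2 * d + 3) by ring, mul_pow]; ring

end Net

theorem exists_mul_le_rpow {b : ℝ} (hb : 1 ≤ b) :
    ∃ c : ℝ, 1 ≤ c ∧ ∀ V : ℝ, 2 ≤ V → b * V ≤ V ^ c := by
  have hlog : 0 ≤ Real.logb 2 b := Real.logb_nonneg (by norm_num) hb
  refine ⟨Real.logb 2 b + 1, by linarith, fun V hV => ?_⟩
  calc b * V = 2 ^ Real.logb 2 b * V := by
        rw [Real.rpow_logb (by norm_num) (by norm_num) (by linarith)]
    _ ≤ V ^ Real.logb 2 b * V := by gcongr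
    _ = V ^ (Real.logb 2 b + 1) := by rw [Real.rpow_add_one (by linarith : (0 : ℝ) < V).ne']

theorem exists_lt_pow_le_mul_rpow {m : ℕ} (hm : 1 ≤ m) {B V : ℝ} (hB : 1 ≤ B) (hV : 0 ≤ V)
    (hmBV : m ≤ B * V) {K : ℕ} (hK : 0 < K) :
    ∃ A : ℕ, m < A ^ K ∧ (A : ℝ) ≤ 2 * B * V ^ ((1 : ℝ) / K) := by
  set x := (m : ℝ) ^ ((1 : ℝ) / K)
  have hx : 1 ≤ x := Real.one_le_rpow (by exact_mod_cast hm) (by positivity)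
  refine ⟨⌊x⌋₊ + 1, ?_, ?_⟩
  · have : (m : ℝ) < ((⌊x⌋₊ + 1 : ℕ) : ℝ) ^ K := by
      calc (m : ℝ) = x ^ K := by
            simp only [x, one_div, Real.rpow_inv_natCast_pow (Nat.cast_nonneg m) hK.ne']
        _ < _ := by gcongr; push_cast; exact Nat.lt_floor_add_one x
    exact_mod_cast this
  · calc ((⌊x⌋₊ + 1 : ℕ) : ℝ) ≤ 2 * x := by
          push_cast; linarith [Nat.floor_le (by linarith : 0 ≤ x)]
      _ ≤ 2 * (B * V) ^ ((1 : ℝ) / K) := by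
        gcongr
        exact Real.rpow_le_rpow (by positivity) hmBV (by positivity)
      _ ≤ 2 * B * V ^ ((1 : ℝ) / K) := by
        rw [Real.mul_rpow (by linarith) hV, mul_assoc]
        gcongr
        exact Real.rpow_le_self_of_one_le hB (by rw [div_le_one (by positivity)]; exact_mod_cast hK)

/-- **Lemma 2.5 (Tao's decomposition lemma, precise version)**: let `γ ≥ 2` be fixed. There is a
constant `C` (independent of `E` and `K`) such that: for every set `E` with `|E| > 1` which is a
finite union of finitely overlapping cubes of side-length `c ∼ 1`, and every `K ∈ ℕ`, `K > 0`,
there are subsets `E_1, …, E_K` of `E` with `E = ∪_k E_k` such that each `E_k` is covered by the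
union of `O(|E|^{1/K})` many `(O(|E|), |E|^{O(γ^{k-1})})`-sparse collections of balls. -/
theorem decomposition_into_sparse_collections (d : ℕ) (γ : ℝ) (hγ : 2 ≤ γ) (M : ℕ) :
    ∃ C : ℝ, 0 < C ∧
      ∀ E : Set (EuclideanSpace ℝ (Fin d)), MeasurableSet E → 1 < volume E →
      ∀ c : ℝ, 1 / 2 ≤ c → c ≤ 2 →
      ∀ P : Finset (EuclideanSpace ℝ (Fin d)),
        (E = ⋃ p ∈ P, cube p c) →
        (∀ x : EuclideanSpace ℝ (Fin d), (P.filter fun p => x ∈ cube p c).card ≤ M) →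
      ∀ K : ℕ, 0 < K →
      ∃ Ek : Fin K → Set (EuclideanSpace ℝ (Fin d)),
        (E = ⋃ k, Ek k) ∧ (∀ k, Ek k ⊆ E) ∧
        ∀ k : Fin K, ∃ (J : ℕ) (Ns : Fin J → ℕ) (Rs : Fin J → ℝ)
            (ctr : (j : Fin J) → Fin (Ns j) → EuclideanSpace ℝ (Fin d)),
          (J : ℝ) ≤ C * (volume E).toReal ^ ((1 : ℝ) / K) ∧
          (∀ j, (Ns j : ℝ) ≤ C * (volume E).toReal) ∧
          (∀ j, 0 < Rs j ∧ Rs j ≤ (volume E).toReal ^ (C * γ ^ (k : ℕ))) ∧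
          (∀ j, IsSparseFamilyEuc γ (Ns j) (Rs j) (ctr j)) ∧
          Ek k ⊆ ⋃ j, ⋃ i, Metric.ball (ctr j i) (Rs j) := by
  set B : ℝ := (4 * d + 6) ^ d * (M + 1) with hBdef
  have hB : 1 ≤ B := one_le_mul_of_one_le_of_one_le (one_le_pow₀ (by linarith)) (by linarith)
  obtain ⟨c₀, hc₀, hc₀V⟩ := exists_mul_le_rpow (b := 3 * B) (by linarith)
  refine ⟨2 * B + 3 * c₀, by positivity, fun E _ hEvol c hc₁ hc₂ P hE hM K hK => ?_⟩
  set V := (volume E).toReal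
  have hV : 1 < V := by
    simpa using ENNReal.toReal_strict_mono (hE ▸ volume_biUnion_cube_lt_top P c).ne hEvol
  obtain ⟨Z, hZ, hZV, hZE⟩ := exists_net_of_eq_biUnion_cube
    (nonempty_of_measure_ne_zero (zero_lt_one.trans hEvol).ne') hc₁ hc₂ hE hM
  have hZB : (#Z : ℝ) ≤ B * V := hZV.trans (by rw [hBdef]; gcongr; linarith)
  by_cases hV₂ : 2 ≤ V
  · obtain ⟨A, hZA, hA⟩ := exists_lt_pow_le_mul_rpow hZ.card_pos hB (by linarith) hZB hK
    obtain ⟨Ek, hEk, hEkE, hcov⟩ :=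
      exists_decomposition_coveredBySparseFamilies (γ := γ) (by linarith) hZ hZE hZA
    refine ⟨Ek, hEk, hEkE, fun k => (hcov k).mono le_rfl ?_ ?_ ?_⟩
    · exact hA.trans (by gcongr; linarith)
    · exact hZB.trans (by gcongr; linarith)
    · refine (sparseRadius_le_rpow (c := c₀) hZ.card_pos hγ hV.le ?_ k).trans ?_
      · exact (hc₀V V hV₂).trans' (by linarith)
      · exact Real.rpow_le_rpow_of_exponent_le hV.le (by gcongr; linarith)
  · have := Fin.pos_iff_nonempty.1 hK
    refine ⟨fun _ => E, (Set.iUnion_const E).symm, fun _ => subset_rfl, fun k =>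
      (coveredBySparseFamilies_of_dist_lt_one (by linarith) Z hZE).mono le_rfl ?_ ?_ ?_⟩
    · nlinarith [Real.one_le_rpow hV.le (by positivity : (0 : ℝ) ≤ 1 / K)]
    · nlinarith
    · exact Real.one_le_rpow hV.le (by positivity)
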